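/- arXiv:1210.8302 — 6 statements merged into one kernel-verified Lean document; each statement's English description precedes it below -/
import Mathlib

section
/- A continuous function f : [0,1] → [0,1] is min-convex (i.e., f(λx + (1−λ)y) ≥ min(f(x), f(y)) for all x, y, λ ∈ [0,1]) if and only if for all 0 ≤ x < z < y ≤ 1, f(z) < f(x) implies f(y) ≤ f(z). -/
/-!
The points `l * x + (1 - l) * y` with `l ∈ [0,1]` fill exactly the interval between `x` and `y`,
so min-convexity says `min (f x) (f y) ≤ f z` whenever `z` lies between `x` and `y`. At the
endpoints this is trivial, and for `x < z < y` the inequality `min (f x) (f y) ≤ f z` is the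
implication `f z < f x → f y ≤ f z`.
-/

open Set

theorem image_convexCombo_Icc_eq_uIcc {𝕜 : Type*} [Field 𝕜] [LinearOrder 𝕜] [IsStrictOrderedRing 𝕜]
    (x y : 𝕜) : (fun l => l * x + (1 - l) * y) '' Icc 0 1 = uIcc x y := by
  rw [← segment_eq_uIcc, segment_symm, segment_eq_image]
  simp only [smul_eq_mul, add_comm]

theorem forall_mem_uIcc_min_le_iff {α β : Type*} [LinearOrder α] [LinearOrder β] {s : Set α}
    {f : α → β} :
    (∀ x ∈ s, ∀ y ∈ s, ∀ z ∈ uIcc x y, min (f x) (f y) ≤ f z) ↔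
      ∀ x ∈ s, ∀ y ∈ s, ∀ z, x < z → z < y → min (f x) (f y) ≤ f z := by
  refine ⟨fun h x hx y hy z hxz hzy => h x hx y hy z (Icc_subset_uIcc ⟨hxz.le, hzy.le⟩), ?_⟩
  intro h x hx y hy z hz
  wlog hxy : x ≤ y generalizing x y
  · rw [min_comm]
    exact this y hy x hx (uIcc_comm x y ▸ hz) (le_of_not_ge hxy)
  rw [uIcc_of_le hxy] at hz
  rcases hz.1.eq_or_lt with rfl | hxz
  · exact min_le_left _ _
  rcases hz.2.eq_or_lt with rfl | hzy
  · exact min_le_right _ _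
  exact h x hx y hy z hxz hzy

theorem stmt0_general (f : ℝ → ℝ) :
    (∀ x ∈ Set.Icc (0:ℝ) 1, ∀ y ∈ Set.Icc (0:ℝ) 1, ∀ l ∈ Set.Icc (0:ℝ) 1,
        min (f x) (f y) ≤ f (l * x + (1 - l) * y)) ↔
      (∀ x z y : ℝ, 0 ≤ x → x < z → z < y → y ≤ 1 → f z < f x → f y ≤ f z) := by
  have hcombo (x y : ℝ) :
      (∀ l ∈ Icc (0:ℝ) 1, min (f x) (f y) ≤ f (l * x + (1 - l) * y)) ↔
        ∀ z ∈ uIcc x y, min (f x) (f y) ≤ f z := by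
    rw [← image_convexCombo_Icc_eq_uIcc, forall_mem_image]
  simp only [hcombo]
  rw [forall_mem_uIcc_min_le_iff]
  simp only [min_le_iff, or_iff_not_imp_left, not_le]
  constructor
  · intro h x z y hx hxz hzy hy
    exact h x ⟨hx, by linarith⟩ y ⟨by linarith, hy⟩ z hxz hzy
  · intro h x hx y hy z hxz hzy
    exact h x z y hx.1 hxz hzy hy.2

/-- A continuous fuzzy set `f : [0,1] → [0,1]` is min-convex iff for all
`0 ≤ x < z < y ≤ 1`, `f z < f x` implies `f y ≤ f z`. -/
theorem stmt0 (f : ℝ → ℝ)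
    (hmap : Set.MapsTo f (Set.Icc 0 1) (Set.Icc 0 1))
    (hcont : ContinuousOn f (Set.Icc 0 1)) :
    (∀ x ∈ Set.Icc (0:ℝ) 1, ∀ y ∈ Set.Icc (0:ℝ) 1, ∀ l ∈ Set.Icc (0:ℝ) 1,
        min (f x) (f y) ≤ f (l * x + (1 - l) * y)) ↔
      (∀ x z y : ℝ, 0 ≤ x → x < z → z < y → y ≤ 1 → f z < f x → f y ≤ f z) :=
  stmt0_general f
end

section
/- A function f : [0,1] → [0,1] is strictly min-convex (i.e., f(λx + (1−λ)y) > min(f(x), f(y)) for all x, y, λ ∈ [0,1] with x ≠ y and 0 < λ < 1) if and only if for all 0 ≤ x < z < y ≤ 1, f(z) ≤ f(x) implies f(y) < f(z). -/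
/-! Strict min-convexity only concerns a point `z` strictly between `x < y`, and every such point is
a combination `l * x + (1 - l) * y` with `0 < l < 1`. For such a triple,
`min (f x) (f y) < f z` says that `f z ≤ f x` forces `f y < f z`. -/

open Set

section StrictMinConvex

variable {𝕜 β : Type*} [Field 𝕜] [LinearOrder 𝕜] [IsStrictOrderedRing 𝕜] [LinearOrder β]

theorem mem_openSegment_iff_exists_combo {x y z : 𝕜} :
    z ∈ openSegment 𝕜 x y ↔ ∃ l : 𝕜, 0 < l ∧ l < 1 ∧ l * x + (1 - l) * y = z := by
  constructor
  · rintro ⟨a, b, ha, hb, hab, rfl⟩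
    obtain rfl : b = 1 - a := eq_sub_of_add_eq' hab
    exact ⟨a, ha, sub_pos.mp hb, rfl⟩
  · rintro ⟨l, hl0, hl1, rfl⟩
    exact ⟨l, 1 - l, hl0, sub_pos.mpr hl1, add_sub_cancel l 1, rfl⟩

theorem forall_combo_min_lt_iff_forall_Ioo {f : 𝕜 → β} {s : Set 𝕜} :
    (∀ x ∈ s, ∀ y ∈ s, x ≠ y → ∀ l : 𝕜, 0 < l → l < 1 →
        min (f x) (f y) < f (l * x + (1 - l) * y)) ↔
      ∀ x ∈ s, ∀ y ∈ s, ∀ z ∈ Ioo x y, min (f x) (f y) < f z := by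
  constructor
  · intro h x hx y hy z hz
    have hxy : x < y := hz.1.trans hz.2
    rw [← openSegment_eq_Ioo hxy, mem_openSegment_iff_exists_combo] at hz
    obtain ⟨l, hl0, hl1, rfl⟩ := hz
    exact h x hx y hy hxy.ne l hl0 hl1
  · intro h x hx y hy hne l hl0 hl1
    have hz : l * x + (1 - l) * y ∈ openSegment 𝕜 x y :=
      mem_openSegment_iff_exists_combo.mpr ⟨l, hl0, hl1, rfl⟩
    rcases hne.lt_or_gt with hxy | hyx
    · rw [openSegment_eq_Ioo hxy] at hz
      exact h x hx y hy _ hz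
    · rw [openSegment_symm, openSegment_eq_Ioo hyx] at hz
      rw [min_comm]
      exact h y hy x hx _ hz

end StrictMinConvex

theorem min_lt_iff_le_imp_lt {α : Type*} [LinearOrder α] {a b c : α} :
    min a b < c ↔ (c ≤ a → b < c) := by
  rw [min_lt_iff, imp_iff_not_or, not_le]

theorem stmt1_general (f : ℝ → ℝ) :
    (∀ x ∈ Set.Icc (0:ℝ) 1, ∀ y ∈ Set.Icc (0:ℝ) 1, x ≠ y →
        ∀ l : ℝ, 0 < l → l < 1 → min (f x) (f y) < f (l * x + (1 - l) * y)) ↔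
      (∀ x z y : ℝ, 0 ≤ x → x < z → z < y → y ≤ 1 → f z ≤ f x → f y < f z) := by
  rw [forall_combo_min_lt_iff_forall_Ioo]
  simp only [min_lt_iff_le_imp_lt]
  constructor
  · intro h x z y hx hxz hzy hy
    exact h x ⟨hx, by linarith⟩ y ⟨by linarith, hy⟩ z ⟨hxz, hzy⟩
  · rintro h x ⟨hx, -⟩ y ⟨-, hy⟩ z ⟨hxz, hzy⟩
    exact h x z y hx hxz hzy hy

/-- A fuzzy set `f : [0,1] → [0,1]` is strictly min-convex iff for all
`0 ≤ x < z < y ≤ 1`, `f z ≤ f x` implies `f y < f z`. -/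
theorem stmt1 (f : ℝ → ℝ)
    (hmap : Set.MapsTo f (Set.Icc 0 1) (Set.Icc 0 1)) :
    (∀ x ∈ Set.Icc (0:ℝ) 1, ∀ y ∈ Set.Icc (0:ℝ) 1, x ≠ y →
        ∀ l : ℝ, 0 < l → l < 1 → min (f x) (f y) < f (l * x + (1 - l) * y)) ↔
      (∀ x z y : ℝ, 0 ≤ x → x < z → z < y → y ≤ 1 → f z ≤ f x → f y < f z) :=
  stmt1_general f
end

section
/- If P = {f_1, …, f_n} is a pseudo-triangular basis of fuzzy sets, then the map T_P : [0,1] → [0,1]^n given by t ↦ (f_1(t), …, f_n(t)) is injective. -/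
/-!
Locate `a < b` in cells `[t_i, t_{i+1}]` and `[t_j, t_{j+1}]` with `i ≤ j`. If `i = j`, the bijectivity of `f_i` on its cell separates them.
Otherwise `f_i` vanishes on the cell of `b`, so `f_i a = 0`, and injectivity on the cell of `a`
forces `a = t_{i+1}`. Then either `j = i + 1`, and `a, b` share the cell of `f_j`, or
`f_{i+1} a = 1` while `f_{i+1}` vanishes on the cell of `b`.
-/

namespace PseudoTriangular

variable {n : ℕ} {t : Fin n → ℝ}

theorem exists_mem_Icc_of_le (z : ℝ) (h0 : ∀ hn : 0 < n, t ⟨0, hn⟩ ≤ z) :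
    ∀ (m : ℕ) (hm : m + 1 < n), z ≤ t ⟨m + 1, hm⟩ →
      ∃ i : Fin n, ∃ hi : (i : ℕ) + 1 < n, z ∈ Set.Icc (t i) (t ⟨i + 1, hi⟩)
  | 0, hm, hz => ⟨⟨0, by omega⟩, hm, h0 _, hz⟩
  | m + 1, hm, hz => by
    by_cases hle : t ⟨m + 1, by omega⟩ ≤ z
    · exact ⟨⟨m + 1, by omega⟩, hm, hle, hz⟩
    · exact exists_mem_Icc_of_le z h0 m (by omega) (not_le.mp hle).le

variable {g : Fin n → ℝ → ℝ}
  (hends : ∀ i : Fin n, ∀ hi : (i : ℕ) + 1 < n, g i (t i) = 1 ∧ g i (t ⟨i + 1, hi⟩) = 0)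
  (hsupp : ∀ i : Fin n, ∀ hi : (i : ℕ) + 1 < n, ∀ j : Fin n, j ≠ i → j ≠ ⟨i + 1, hi⟩ →
    ∀ x ∈ Set.Icc (t i) (t ⟨i + 1, hi⟩), g j x = 0)
  (hinj : ∀ i : Fin n, ∀ hi : (i : ℕ) + 1 < n, Set.InjOn (g i) (Set.Icc (t i) (t ⟨i + 1, hi⟩)))
include hends hsupp hinj

theorem eq_of_forall_apply_eq {i j : Fin n} {hi : (i : ℕ) + 1 < n} {hj : (j : ℕ) + 1 < n}
    (hij : i ≤ j) {a b : ℝ} (ha : a ∈ Set.Icc (t i) (t ⟨i + 1, hi⟩))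
    (hb : b ∈ Set.Icc (t j) (t ⟨j + 1, hj⟩)) (hab : ∀ k, g k a = g k b) : a = b := by
  rcases hij.eq_or_lt with rfl | hlt
  · exact hinj i hi ha hb (hab i)
  have ha_zero : g i a = 0 :=
    (hab i).trans (hsupp j hj i hlt.ne (Fin.ne_of_val_ne (show (i : ℕ) ≠ j + 1 by omega)) b hb)
  have ha_node : a = t ⟨i + 1, hi⟩ :=
    hinj i hi ha ⟨ha.1.trans ha.2, le_rfl⟩ (ha_zero.trans (hends i hi).2.symm)
  rcases (Nat.succ_le_of_lt hlt).eq_or_lt with hj_succ | hj_far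
  · obtain rfl : j = ⟨i + 1, hi⟩ := Fin.ext hj_succ.symm
    exact hinj _ hj ⟨ha_node.ge, ha_node.le.trans (hb.1.trans hb.2)⟩ hb (hab _)
  · have h_one : g ⟨i + 1, hi⟩ a = 1 := 
      ha_node ▸ (hends ⟨i + 1, hi⟩ (show (i : ℕ) + 1 + 1 < n by omega)).1
    have h_zero : g ⟨i + 1, hi⟩ b = 0 :=
      hsupp j hj _ (Fin.ne_of_val_ne (show (i : ℕ) + 1 ≠ j by omega))
        (Fin.ne_of_val_ne (show (i : ℕ) + 1 ≠ j + 1 by omega)) b hb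
    linarith [hab ⟨i + 1, hi⟩]

end PseudoTriangular
/-- If `P = {f_1,…,f_n}` is a pseudo-triangular basis of fuzzy sets
(conditions (a)–(d), up to a permutation `σ` of the indices), then
`T_P : [0,1] → [0,1]^n` is injective. -/
theorem stmt2 (n : ℕ) (hn : 2 ≤ n) (f : Fin n → ℝ → ℝ)
    (σ : Equiv.Perm (Fin n)) (t : Fin n → ℝ)
    (ht0 : t ⟨0, by omega⟩ = 0)
    (ht1 : t ⟨n - 1, by omega⟩ = 1)
    (ha : ∀ i : Fin n, ∀ hi : (i : ℕ) + 1 < n,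
        f (σ i) (t i) = 1 ∧ f (σ i) (t ⟨(i : ℕ) + 1, hi⟩) = 0)
    (hb : ∀ i : Fin n, ∀ hi : (i : ℕ) + 1 < n, ∀ j : Fin n,
        j ≠ i → j ≠ ⟨(i : ℕ) + 1, hi⟩ →
        ∀ x ∈ Set.Icc (t i) (t ⟨(i : ℕ) + 1, hi⟩), f (σ j) x = 0)
    (hd : ∀ i : Fin n, ∀ hi : (i : ℕ) + 1 < n,
        Set.BijOn (f (σ i)) (Set.Icc (t i) (t ⟨(i : ℕ) + 1, hi⟩)) (Set.Icc 0 1) ∧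
        Set.BijOn (f (σ ⟨(i : ℕ) + 1, hi⟩))
          (Set.Icc (t i) (t ⟨(i : ℕ) + 1, hi⟩)) (Set.Icc 0 1)) :
    Set.InjOn (fun x => (WithLp.toLp 2 (fun i => f i x) : EuclideanSpace ℝ (Fin n))) (Set.Icc 0 1) := by
  intro x hx y hy hxy
  have hval : ∀ k, f (σ k) x = f (σ k) y :=
    fun k => congrFun (WithLp.toLp_injective 2 hxy) (σ k)
  obtain ⟨m, rfl⟩ : ∃ m, n = m + 2 := ⟨n - 2, by omega⟩
  have cell : ∀ z ∈ Set.Icc (0 : ℝ) 1,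
      ∃ i : Fin (m + 2), ∃ hi : (i : ℕ) + 1 < m + 2, z ∈ Set.Icc (t i) (t ⟨i + 1, hi⟩) :=
    fun z hz => PseudoTriangular.exists_mem_Icc_of_le z (fun _ => ht0 ▸ hz.1) m (by omega)
      (ht1 ▸ hz.2)
  obtain ⟨i, hi, hxi⟩ := cell x hx
  obtain ⟨j, hj, hyj⟩ := cell y hy
  have hinj := fun i hi => (hd i hi).1.injOn
  rcases le_total i j with hij | hji
  · exact PseudoTriangular.eq_of_forall_apply_eq ha hb hinj hij hxi hyj hval
  · exact (PseudoTriangular.eq_of_forall_apply_eq ha hb hinj hji hyj hxi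
      fun k => (hval k).symm).symm
end

section
/- If T_P : [0,1] → [0,1]^n is injective and its range equals a Hamiltonian path ⋃_{i=1}^{n−1} conv{e_{π(i)}, e_{π(i+1)}}, then each f_i is strongly normal: there exists a unique x ∈ [0,1] with f_i(x) = 1. -/
/-! The point `t • e_a + (1 - t) • e_b` of an edge has `i`-th coordinate `1` only when it is the
vertex `e_i`, so `e_i` is the only point of the path with `i`-th coordinate `1`. Every vertex lies
on the path, and the parametrization is injective, so `f i = 1` at exactly one parameter. -/

open Set

theorem EuclideanSpace.eq_single_of_mem_segment_single_of_apply_eq_one {ι : Type*}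
    [DecidableEq ι] {i a b : ι} (hab : a ≠ b)
    {p : EuclideanSpace ℝ ι}
    (hp : p ∈ segment ℝ (EuclideanSpace.single a 1) (EuclideanSpace.single b 1))
    (hpi : p i = 1) : p = EuclideanSpace.single i 1 := by
  obtain ⟨t, s, ht, hs, hts, rfl⟩ := hp
  simp only [PiLp.add_apply, PiLp.smul_apply, PiLp.single_apply, smul_eq_mul] at hpi
  rcases eq_or_ne i a with rfl | hia
  · obtain rfl : s = 0 := by simp [hab] at hpi; linarith
    simp [show t = 1 by linarith]
  rcases eq_or_ne i b with rfl | hib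
  · obtain rfl : t = 0 := by simp [hia] at hpi; linarith
    simp [show s = 1 by linarith]
  · simp [hia, hib] at hpi

def hamiltonianPath {n : ℕ} (π : Equiv.Perm (Fin n)) : Set (EuclideanSpace ℝ (Fin n)) :=
  ⋃ i : Fin n, ⋃ hi : (i : ℕ) + 1 < n,
    segment ℝ (EuclideanSpace.single (π i) 1) (EuclideanSpace.single (π ⟨(i : ℕ) + 1, hi⟩) 1)

theorem single_mem_hamiltonianPath {n : ℕ} (hn : 2 ≤ n) (π : Equiv.Perm (Fin n)) (i : Fin n) :
    EuclideanSpace.single i 1 ∈ hamiltonianPath π := by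
  simp only [hamiltonianPath, mem_iUnion]
  by_cases hlast : (π.symm i : ℕ) + 1 < n
  · refine ⟨π.symm i, hlast, ?_⟩
    rw [Equiv.apply_symm_apply]
    exact left_mem_segment ℝ _ _
  · -- the last vertex of the path is the right end of the last edge
    refine ⟨⟨n - 2, by omega⟩, by simp only; omega, ?_⟩
    have hprev : (⟨n - 2 + 1, by omega⟩ : Fin n) = π.symm i := by
      ext; simp only; omega
    rw [hprev, Equiv.apply_symm_apply]
    exact right_mem_segment ℝ _ _

theorem eq_single_of_mem_hamiltonianPath {n : ℕ} {π : Equiv.Perm (Fin n)}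
    {p : EuclideanSpace ℝ (Fin n)} (hp : p ∈ hamiltonianPath π) {i : Fin n} (hpi : p i = 1) :
    p = EuclideanSpace.single i 1 := by
  simp only [hamiltonianPath, mem_iUnion] at hp
  obtain ⟨j, hj, hseg⟩ := hp
  refine EuclideanSpace.eq_single_of_mem_segment_single_of_apply_eq_one ?_ hseg hpi
  rw [Ne, π.injective.eq_iff, Fin.ext_iff]
  simp

theorem stmt7_general (n : ℕ) (hn : 2 ≤ n) (f : Fin n → ℝ → ℝ)
    (hinj : Set.InjOn (fun x => (WithLp.toLp 2 (fun i => f i x) : EuclideanSpace ℝ (Fin n)))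
      (Set.Icc 0 1))
    (π : Equiv.Perm (Fin n))
    (hrange : (fun x => (WithLp.toLp 2 (fun i => f i x) : EuclideanSpace ℝ (Fin n))) '' (Set.Icc 0 1) =
      ⋃ i : Fin n, ⋃ hi : (i : ℕ) + 1 < n,
        segment ℝ (EuclideanSpace.single (π i) 1)
          (EuclideanSpace.single (π ⟨(i : ℕ) + 1, hi⟩) 1)) :
    ∀ i : Fin n, ∃! x, x ∈ Set.Icc (0:ℝ) 1 ∧ f i x = 1 := by
  intro i
  change _ = hamiltonianPath π at hrange
  obtain ⟨x, hx, hxi⟩ := hrange ▸ single_mem_hamiltonianPath hn π i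
  refine ⟨x, ⟨hx, by simpa using congrArg (· i) hxi⟩, fun y ⟨hy, hyi⟩ => hinj hy hx ?_⟩
  rw [hxi]
  exact eq_single_of_mem_hamiltonianPath (hrange ▸ mem_image_of_mem _ hy) hyi

theorem stmt7 (n : ℕ) (hn : 2 ≤ n) (f : Fin n → ℝ → ℝ)
    (hcont : ∀ i, ContinuousOn (f i) (Set.Icc 0 1))
    (hmap : ∀ i, Set.MapsTo (f i) (Set.Icc 0 1) (Set.Icc 0 1))
    (hinj : Set.InjOn (fun x => (WithLp.toLp 2 (fun i => f i x) : EuclideanSpace ℝ (Fin n)))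
      (Set.Icc 0 1))
    (π : Equiv.Perm (Fin n))
    (hrange : (fun x => (WithLp.toLp 2 (fun i => f i x) : EuclideanSpace ℝ (Fin n))) '' (Set.Icc 0 1) =
      ⋃ i : Fin n, ⋃ hi : (i : ℕ) + 1 < n,
        segment ℝ (EuclideanSpace.single (π i) 1)
          (EuclideanSpace.single (π ⟨(i : ℕ) + 1, hi⟩) 1)) :
    ∀ i : Fin n, ∃! x, x ∈ Set.Icc (0:ℝ) 1 ∧ f i x = 1 :=
  stmt7_general n hn f hinj π hrange
end

section
/- The set of points (x_1,…,x_n) ∈ [0,1]^n satisfying: (i) min{x_i, x_j} = 0 for all |i−j| > 1, and (ii) x_i + x_{i+1} ≤ 1 for all i = 1,…,n−1, equals ⋃_{i=1}^{n−1} conv{0, e_i, e_{i+1}}. -/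
/-!
Condition (i) forces the support of `x` into two adjacent coordinates `m, m + 1`: take `m` to be
the least index of the support, moved down by one if it is the last index. A nonnegative vector
supported on `{i, j}` lies in `conv {0, eᵢ, eⱼ}` exactly when `xᵢ + xⱼ ≤ 1`. Conversely, on such a
triangle every coordinate and every sum `x_k + x_{k+1}` is bounded by the total `∑ x = xᵢ + xⱼ ≤ 1`.
-/

open Set

theorem convexHull_zero_pair {𝕜 E : Type*} [Field 𝕜] [LinearOrder 𝕜] [IsStrictOrderedRing 𝕜]
    [AddCommGroup E] [Module 𝕜 E] (p q : E) :
    convexHull 𝕜 {0, p, q} =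
      {x | ∃ a b : 𝕜, 0 ≤ a ∧ 0 ≤ b ∧ a + b ≤ 1 ∧ a • p + b • q = x} := by
  apply Subset.antisymm
  · refine convexHull_min ?_ ?_
    · rintro x (rfl | rfl | rfl)
      · exact ⟨0, 0, le_rfl, le_rfl, by norm_num, by simp⟩
      · exact ⟨1, 0, zero_le_one, le_rfl, by norm_num, by simp⟩
      · exact ⟨0, 1, le_rfl, zero_le_one, by norm_num, by simp⟩
    · rintro - ⟨a, b, ha, hb, hab, rfl⟩ - ⟨a', b', ha', hb', hab', rfl⟩ s t hs ht hst
      refine ⟨s * a + t * a', s * b + t * b', by positivity, by positivity, ?_, by module⟩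
      nlinarith
  · rintro - ⟨a, b, ha, hb, hab, rfl⟩
    have := (convex_convexHull 𝕜 ({0, p, q} : Set E)).sum_mem (t := Finset.univ)
      (w := ![1 - a - b, a, b]) (z := ![0, p, q]) ?_ ?_ ?_
    · simpa [Fin.sum_univ_three] using this
    · intro i _
      fin_cases i <;> simp <;> linarith
    · simp [Fin.sum_univ_three]
      ring
    · intro i _
      fin_cases i <;> exact subset_convexHull 𝕜 _ (by simp)

theorem mem_convexHull_zero_single_pair {ι : Type*} [DecidableEq ι] {i j : ι} (hij : i ≠ j)
    (x : ι → ℝ) :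
    x ∈ convexHull ℝ {0, Pi.single i 1, Pi.single j 1} ↔
      (∀ k, 0 ≤ x k) ∧ x i + x j ≤ 1 ∧ ∀ k, k ≠ i → k ≠ j → x k = 0 := by
  rw [convexHull_zero_pair]
  constructor
  · rintro ⟨a, b, ha, hb, hab, rfl⟩
    refine ⟨fun k => ?_, by simpa [hij, hij.symm] using hab, fun k hki hkj => by simp [hki, hkj]⟩
    by_cases hki : k = i
    · subst hki
      simpa [hij] using ha
    · by_cases hkj : k = j
      · subst hkj
        simpa [hki] using hb
      · simp [hki, hkj]
  · rintro ⟨hx, hxij, hzero⟩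
    refine ⟨x i, x j, hx i, hx j, hxij, funext fun k => ?_⟩
    by_cases hki : k = i
    · subst hki
      simp [hij]
    · by_cases hkj : k = j
      · subst hkj
        simp [hki]
      · simp [hki, hkj, hzero k hki hkj]

theorem Fin.exists_support_subset_adjacent {M : Type*} [Zero M] {n : ℕ} (hn : 2 ≤ n)
    (x : Fin n → M) (hx : ∀ i j : Fin n, (i : ℕ) + 1 < j → x i = 0 ∨ x j = 0) :
    ∃ m : Fin n, (m : ℕ) + 1 < n ∧
      ∀ k : Fin n, (k : ℕ) ≠ m → (k : ℕ) ≠ m + 1 → x k = 0 := by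
  by_cases hzero : ∀ k, x k = 0
  · exact ⟨⟨0, by omega⟩, by show 0 + 1 < n; omega, fun k _ _ => hzero k⟩
  obtain ⟨j, hj, hjmin⟩ := wellFounded_lt.has_min {k | x k ≠ 0} (not_forall.1 hzero)
  refine ⟨⟨min j (n - 2), by omega⟩, by simp; omega, fun k hk hk' => ?_⟩
  by_contra hxk
  have hjk : (j : ℕ) ≤ k := not_lt.1 (hjmin k hxk)
  have hkj : (k : ℕ) ≤ j + 1 := not_lt.1 fun h => hxk ((hx j k h).resolve_left hj)
  simp only at hk hk'
  omega

theorem Fin.mem_convexHull_zero_single_succ {n : ℕ} {i : Fin n} (hi : (i : ℕ) + 1 < n)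
    (x : Fin n → ℝ) :
    x ∈ convexHull ℝ {0, Pi.single i 1, Pi.single ⟨(i : ℕ) + 1, hi⟩ 1} ↔
      (∀ k, 0 ≤ x k) ∧ x i + x ⟨(i : ℕ) + 1, hi⟩ ≤ 1 ∧
        ∀ k : Fin n, (k : ℕ) ≠ i → (k : ℕ) ≠ i + 1 → x k = 0 := by
  rw [mem_convexHull_zero_single_pair (Fin.ne_of_val_ne (by simp))]
  simp only [ne_eq, Fin.ext_iff]

theorem Fin.sum_eq_add_succ_of_support {M : Type*} [AddCommMonoid M] {n : ℕ} {i : Fin n}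
    (hi : (i : ℕ) + 1 < n) {x : Fin n → M}
    (hzero : ∀ k : Fin n, (k : ℕ) ≠ i → (k : ℕ) ≠ i + 1 → x k = 0) :
    ∑ k, x k = x i + x ⟨(i : ℕ) + 1, hi⟩ :=
  Fintype.sum_eq_add _ _ (Fin.ne_of_val_ne (by simp)) fun k hk =>
    hzero k (Fin.val_ne_of_ne hk.1) fun h => hk.2 (Fin.ext h)

theorem Fin.eq_zero_or_eq_zero_of_support {M : Type*} [Zero M] {n i : ℕ} {x : Fin n → M}
    (hzero : ∀ k : Fin n, (k : ℕ) ≠ i → (k : ℕ) ≠ i + 1 → x k = 0) {i₀ j₀ : Fin n}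
    (hfar : (i₀ : ℕ) + 1 < j₀ ∨ (j₀ : ℕ) + 1 < i₀) : x i₀ = 0 ∨ x j₀ = 0 := by
  have hsupp : ∀ k, x k ≠ 0 → (k : ℕ) = i ∨ (k : ℕ) = i + 1 := fun k hk =>
    by_contra fun h => hk (hzero k (not_or.1 h).1 (not_or.1 h).2)
  by_contra h
  have := hsupp i₀ (not_or.1 h).1
  have := hsupp j₀ (not_or.1 h).2
  omega

/-- The set of points of `[0,1]^n` satisfying `min{x_i, x_j} = 0` for all
`|i−j| > 1` and `x_i + x_{i+1} ≤ 1` for all `i` equals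
`⋃_{i=1}^{n−1} conv{0, e_i, e_{i+1}}`. -/
theorem stmt14 (n : ℕ) (hn : 2 ≤ n) :
    {x : Fin n → ℝ | (∀ k, x k ∈ Set.Icc (0:ℝ) 1) ∧
        (∀ i j : Fin n, ((i : ℕ) + 1 < j ∨ (j : ℕ) + 1 < i) →
          min (x i) (x j) = 0) ∧
        ∀ i : Fin n, ∀ hi : (i : ℕ) + 1 < n,
          x i + x ⟨(i : ℕ) + 1, hi⟩ ≤ 1} =
      ⋃ i : Fin n, ⋃ hi : (i : ℕ) + 1 < n,
        convexHull ℝ {(0 : Fin n → ℝ), Pi.single i 1,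
          Pi.single (⟨(i : ℕ) + 1, hi⟩ : Fin n) 1} := by
  ext x
  simp only [mem_ofPred_eq, mem_iUnion, Fin.mem_convexHull_zero_single_succ]
  constructor
  · rintro ⟨hIcc, hmin, hsum⟩
    have hx : ∀ i j : Fin n, (i : ℕ) + 1 < j → x i = 0 ∨ x j = 0 := fun i j hij =>
      (min_eq_iff.1 (hmin i j (Or.inl hij))).imp And.left And.left
    obtain ⟨m, hm, hzero⟩ := Fin.exists_support_subset_adjacent hn x hx
    exact ⟨m, hm, fun k => (hIcc k).1, hsum m hm, hzero⟩
  · rintro ⟨i, hi, hnonneg, hsum, hzero⟩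
    have htotal : ∑ k, x k ≤ 1 := (Fin.sum_eq_add_succ_of_support hi hzero).symm ▸ hsum
    refine ⟨fun k => ⟨hnonneg k, ?_⟩, fun i₀ j₀ hfar => ?_, fun k hk => ?_⟩
    · exact (Finset.single_le_sum (fun l _ => hnonneg l) (Finset.mem_univ k)).trans htotal
    · rcases Fin.eq_zero_or_eq_zero_of_support hzero hfar with h | h
      · simp [h, hnonneg j₀]
      · simp [h, hnonneg i₀]
    · calc x k + x ⟨(k : ℕ) + 1, hk⟩ = ∑ l ∈ {k, ⟨(k : ℕ) + 1, hk⟩}, x l :=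
            (Finset.sum_pair (Fin.ne_of_val_ne (by simp))).symm
        _ ≤ ∑ l, x l := Finset.sum_le_univ_sum_of_nonneg hnonneg
        _ ≤ 1 := htotal
end

section
/- The set of points (x_1,…,x_n) ∈ [0,1]^n satisfying: (i) min{x_i, x_j} = 0 for all |i−j| > 1, (ii) x_i + x_{i+1} ≤ 1 for all i = 1,…,n−1, and (iii) x_1 + ⋯ + x_n ≥ 1, equals the Hamiltonian path ⋃_{i=1}^{n−1} conv{e_i, e_{i+1}} in the 1-skeleton of the fundamental simplex Δ_n. -/
/-!
A point satisfying (i) has nonnegative coordinates whose support has diameter at most one, so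
it lies in `{i, i + 1}` for some `i < n - 1` (if the support is `{n - 1}`, take `i = n - 2`,
which needs `2 ≤ n`). Then (ii) and (iii) force `x i + x (i + 1) = 1`, i.e. `x` is a point of the
standard simplex supported on `{i, i + 1}`, which is exactly the edge `[e_i, e_{i+1}]`.
Conversely every point of that edge is in the simplex, and (i)–(iii) follow.
-/

open Set

lemma min_eq_zero_iff_of_nonneg {α : Type*} [LinearOrder α] [Zero α] {a b : α} (ha : 0 ≤ a)
    (hb : 0 ≤ b) : min a b = 0 ↔ a = 0 ∨ b = 0 := by
  grind

section Edge

variable {𝕜 ι : Type*} [Semiring 𝕜] [PartialOrder 𝕜] [IsOrderedRing 𝕜] [Fintype ι]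
  [DecidableEq ι]

lemma mem_segment_single_iff {i j : ι} (hij : i ≠ j) {x : ι → 𝕜} :
    x ∈ segment 𝕜 (Pi.single i 1) (Pi.single j 1) ↔
      x ∈ stdSimplex 𝕜 ι ∧ ∀ k, k ≠ i → k ≠ j → x k = 0 := by
  constructor
  · intro hx
    refine ⟨segment_single_subset_stdSimplex 𝕜 i j hx, fun k hki hkj => ?_⟩
    obtain ⟨a, b, -, -, -, rfl⟩ := hx
    simp [hki, hkj]
  · rintro ⟨⟨hx_nonneg, hx_sum⟩, hx_zero⟩
    have hsplit : ∑ k, Pi.single k (x k) = Pi.single i (x i) + Pi.single j (x j) :=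
      Fintype.sum_eq_add i j hij fun k hk => by rw [hx_zero k hk.1 hk.2, Pi.single_zero]
    refine ⟨x i, x j, hx_nonneg i, hx_nonneg j, ?_, ?_⟩
    · rwa [← Fintype.sum_eq_add i j hij fun k hk => hx_zero k hk.1 hk.2]
    · calc x i • Pi.single i 1 + x j • Pi.single j 1 = Pi.single i (x i) + Pi.single j (x j) := by
            rw [← Pi.single_smul, ← Pi.single_smul, smul_eq_mul, smul_eq_mul, mul_one, mul_one]
        _ = x := hsplit.symm.trans (Finset.univ_sum_single x)

lemma add_le_one_of_mem_stdSimplex {x : ι → 𝕜} (hx : x ∈ stdSimplex 𝕜 ι) {i j : ι}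
    (hij : i ≠ j) : x i + x j ≤ 1 := by
  rw [← hx.2, ← Finset.sum_pair hij]
  exact Finset.sum_le_sum_of_subset_of_nonneg (Finset.subset_univ _) fun k _ _ => hx.1 k

end Edge

lemma Fin.exists_forall_mem_eq_or_eq_succ {n : ℕ} (hn : 2 ≤ n) {s : Finset (Fin n)}
    (hs : ∀ k ∈ s, ∀ l ∈ s, (k : ℕ) ≤ l + 1) :
    ∃ (i : Fin n) (hi : (i : ℕ) + 1 < n), ∀ k ∈ s, k = i ∨ k = ⟨i + 1, hi⟩ := by
  rcases s.eq_empty_or_nonempty with rfl | hne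
  · exact ⟨⟨0, by omega⟩, show 0 + 1 < n by omega, by simp⟩
  set m := s.min' hne
  refine ⟨⟨min m (n - 2), by omega⟩, show min (m : ℕ) (n - 2) + 1 < n by omega, fun k hk => ?_⟩
  have hmk : m ≤ k := s.min'_le k hk
  have hkm : (k : ℕ) ≤ m + 1 := hs k hk m (s.min'_mem hne)
  have hk_lt := k.isLt
  rw [Fin.le_iff_val_le_val] at hmk
  rw [Fin.ext_iff, Fin.ext_iff]
  dsimp only
  omega

section Path

variable {𝕜 : Type*} [Semiring 𝕜] [LinearOrder 𝕜] [IsOrderedRing 𝕜] {n : ℕ}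

lemma exists_mem_segment_single_succ (hn : 2 ≤ n) {x : Fin n → 𝕜} (hx_nonneg : ∀ k, 0 ≤ x k)
    (hx_min : ∀ i j : Fin n, ((i : ℕ) + 1 < j ∨ (j : ℕ) + 1 < i) → min (x i) (x j) = 0)
    (hx_adj : ∀ (i : Fin n) (hi : (i : ℕ) + 1 < n), x i + x ⟨i + 1, hi⟩ ≤ 1)
    (hx_sum : 1 ≤ ∑ k, x k) :
    ∃ (i : Fin n) (hi : (i : ℕ) + 1 < n),
      x ∈ segment 𝕜 (Pi.single i 1) (Pi.single (⟨i + 1, hi⟩ : Fin n) 1) := by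
  have hsupp : ∀ k ∈ Finset.univ.filter (x · ≠ 0), ∀ l ∈ Finset.univ.filter (x · ≠ 0),
      (k : ℕ) ≤ l + 1 := by
    simp only [Finset.mem_filter, Finset.mem_univ, true_and]
    intro k hk l hl
    by_contra! hkl
    exact ((min_eq_zero_iff_of_nonneg (hx_nonneg k) (hx_nonneg l)).1
      (hx_min k l (Or.inr hkl))).elim hk hl
  obtain ⟨i, hi, hi_supp⟩ := Fin.exists_forall_mem_eq_or_eq_succ hn hsupp
  have hij : i ≠ ⟨i + 1, hi⟩ := by simp [Fin.ext_iff]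
  have hx_zero : ∀ k, k ≠ i → k ≠ ⟨i + 1, hi⟩ → x k = 0 := fun k hki hkj => by
    by_contra hk
    exact (hi_supp k (by simpa using hk)).elim hki hkj
  refine ⟨i, hi, (mem_segment_single_iff hij).2 ⟨⟨hx_nonneg, ?_⟩, hx_zero⟩⟩
  rw [Fintype.sum_eq_add i _ hij fun k hk => hx_zero k hk.1 hk.2] at hx_sum ⊢
  exact le_antisymm (hx_adj i hi) hx_sum

lemma min_eq_zero_of_mem_segment_single_succ {i : Fin n} (hi : (i : ℕ) + 1 < n) {x : Fin n → 𝕜}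
    (hx : x ∈ segment 𝕜 (Pi.single i 1) (Pi.single (⟨i + 1, hi⟩ : Fin n) 1)) {p q : Fin n}
    (hpq : (p : ℕ) + 1 < q ∨ (q : ℕ) + 1 < p) : min (x p) (x q) = 0 := by
  obtain ⟨⟨hx_nonneg, -⟩, hx_zero⟩ := (mem_segment_single_iff (by simp [Fin.ext_iff])).1 hx
  have hx_supp : ∀ k, x k ≠ 0 → (k : ℕ) = i ∨ (k : ℕ) = i + 1 := fun k hk => by
    by_contra! h
    exact hk (hx_zero k (fun h' => h.1 (by rw [h'])) (fun h' => h.2 (by rw [h'])))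
  rw [min_eq_zero_iff_of_nonneg (hx_nonneg p) (hx_nonneg q)]
  by_contra! h
  have := hx_supp p h.1
  have := hx_supp q h.2
  omega

end Path

/-- Lemma 3 (1-set of 𝔸): the set of points of `[0,1]^n` satisfying
`min{x_i, x_j} = 0` for `|i−j| > 1`, `x_i + x_{i+1} ≤ 1` for all `i`, and
`x_1 + ⋯ + x_n ≥ 1`, equals the Hamiltonian path
`⋃_{i=1}^{n−1} conv{e_i, e_{i+1}}`. -/
theorem stmt15 (n : ℕ) (hn : 2 ≤ n) :
    {x : Fin n → ℝ | (∀ k, x k ∈ Set.Icc (0:ℝ) 1) ∧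
        (∀ i j : Fin n, ((i : ℕ) + 1 < j ∨ (j : ℕ) + 1 < i) →
          min (x i) (x j) = 0) ∧
        (∀ i : Fin n, ∀ hi : (i : ℕ) + 1 < n,
          x i + x ⟨(i : ℕ) + 1, hi⟩ ≤ 1) ∧
        1 ≤ ∑ i : Fin n, x i} =
      ⋃ i : Fin n, ⋃ hi : (i : ℕ) + 1 < n,
        segment ℝ (Pi.single i 1) (Pi.single (⟨(i : ℕ) + 1, hi⟩ : Fin n) 1) := by
  ext x
  simp only [mem_ofPred_eq, mem_iUnion]
  constructor
  · rintro ⟨hx_Icc, hx_min, hx_adj, hx_sum⟩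
    exact exists_mem_segment_single_succ hn (fun k => (hx_Icc k).1) hx_min hx_adj hx_sum
  · rintro ⟨i, hi, hx⟩
    have hx_simplex := segment_single_subset_stdSimplex ℝ _ _ hx
    exact ⟨mem_Icc_of_mem_stdSimplex hx_simplex,
      fun p q => min_eq_zero_of_mem_segment_single_succ hi hx,
      fun k _ => add_le_one_of_mem_stdSimplex hx_simplex (by simp [Fin.ext_iff]),
      hx_simplex.2.ge⟩
end
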